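/- Existence of the Bevan point: Let A, B, C be affinely independent points in the Euclidean plane, set a = dist B C, b = dist C A, c = dist A B and p = (a + b + c)/2. Let A₁ be the point strictly between B and C with dist B A₁ = p − c, let B₁ be the point strictly between C and A with dist C B₁ = p − a, and let C₁ be the point strictly between A and B with dist A C₁ = p − b (the vertices of the cotangent triangle). Then there exists a point V such that V − A₁ is orthogonal to C − B, V − B₁ is orthogonal to A − C, and V − C₁ is orthogonal to B − A; that is, the perpendiculars to the sides of triangle ABC erected at the vertices of the cotangent triangle are concurrent. -/

import Mathlib

/-! The perpendicular to `BC` at `A₁` is the locus of the points `V` with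
`VB² - VC² = A₁B² - A₁C²`. The three such differences of squares for `V` sum to zero, so by
Carnot's criterion the perpendiculars at `A₁`, `B₁`, `C₁` concur as soon as
`A₁B² - A₁C² + B₁C² - B₁A² + C₁A² - C₁B² = 0`; two of them always meet since two sides of
a triangle are linearly independent. For the cotangent triangle `A₁B = p - c` and
`A₁C = p - b`, and cyclically, so Carnot's sum telescopes to zero. -/

open RealInnerProductSpace

theorem Wbtw.dist_right_eq_sub {E P : Type*} [SeminormedAddCommGroup E] [NormedSpace ℝ E]
    [PseudoMetricSpace P] [NormedAddTorsor E P] {x y z : P} (h : Wbtw ℝ x y z) :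
    dist y z = dist x z - dist x y :=
  eq_sub_of_add_eq' h.dist_add_dist

section

variable {E : Type*} [NormedAddCommGroup E] [InnerProductSpace ℝ E]

theorem exists_inner_eq_of_linearIndependent {ι : Type*} [Finite ι] {v : ι → E}
    (hv : LinearIndependent ℝ v) (α : ι → ℝ) : ∃ V : E, ∀ i, ⟪V, v i⟫ = α i := by
  let K := Submodule.span ℝ (Set.range v)
  have : FiniteDimensional ℝ K := FiniteDimensional.span_of_finite ℝ (Set.finite_range v)
  -- `V` is the Riesz representative on `K` of the functional sending `v i` to `α i`.
  let f : StrongDual ℝ K := LinearMap.toContinuousLinearMap ((Module.Basis.span hv).constr ℝ α)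
  refine ⟨(InnerProductSpace.toDual ℝ K).symm f, fun i => ?_⟩
  have h := InnerProductSpace.toDual_symm_apply (x := Module.Basis.span hv i) (y := f)
  rwa [LinearMap.coe_toContinuousLinearMap', Module.Basis.constr_basis, Submodule.coe_inner,
    Module.Basis.span_apply] at h

theorem AffineIndependent.linearIndependent_sub_sub {A B C : E}
    (h : AffineIndependent ℝ ![A, B, C]) : LinearIndependent ℝ ![A - C, B - C] := by
  rw [affineIndependent_iff_linearIndependent_vsub ℝ _ (2 : Fin 3)] at h
  convert h.comp (fun i : Fin 2 => ⟨Fin.castSucc i, Fin.castSucc_ne_last i⟩)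
    (fun i j hij => Fin.castSucc_injective _ (congrArg Subtype.val hij)) using 1
  · ext i : 1
    fin_cases i <;> rfl
  · rfl

theorem two_mul_inner_sub_sub (V X P Q : E) :
    2 * ⟪V - X, Q - P⟫ = dist V P ^ 2 - dist V Q ^ 2 - (dist X P ^ 2 - dist X Q ^ 2) := by
  simp only [dist_eq_norm, norm_sub_sq_real, inner_sub_left, inner_sub_right]
  ring

theorem exists_perpendiculars_concurrent_of_carnot {A B C A₁ B₁ C₁ : E}
    (hABC : AffineIndependent ℝ ![A, B, C])
    (hcarnot : dist A₁ B ^ 2 - dist A₁ C ^ 2 + dist B₁ C ^ 2 - dist B₁ A ^ 2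
      + dist C₁ A ^ 2 - dist C₁ B ^ 2 = 0) :
    ∃ V : E, ⟪V - A₁, C - B⟫ = 0 ∧ ⟪V - B₁, A - C⟫ = 0 ∧ ⟪V - C₁, B - A⟫ = 0 := by
  obtain ⟨V, hV⟩ := exists_inner_eq_of_linearIndependent hABC.linearIndependent_sub_sub
    ![⟪B₁, A - C⟫, ⟪A₁, B - C⟫]
  have hVA : ⟪V, A - C⟫ = ⟪B₁, A - C⟫ := hV 0
  have hVB : ⟪V, B - C⟫ = ⟪A₁, B - C⟫ := hV 1
  have hA : ⟪V - A₁, C - B⟫ = 0 := by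
    rw [← neg_sub B C, inner_neg_right, inner_sub_left, hVB, sub_self, neg_zero]
  have hB : ⟪V - B₁, A - C⟫ = 0 := by
    rw [inner_sub_left, hVA, sub_self]
  refine ⟨V, hA, hB, ?_⟩
  linear_combination (two_mul_inner_sub_sub V A₁ B C + two_mul_inner_sub_sub V B₁ C A
    + two_mul_inner_sub_sub V C₁ A B - 2 * hA - 2 * hB - hcarnot) / 2

end

/-- **Existence of the Bevan point.** If `A₁`, `B₁`, `C₁` are the vertices of the cotangent
triangle of triangle `ABC` (so `dist B A₁ = p − c`, `dist C B₁ = p − a`,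
`dist A C₁ = p − b`), then the perpendiculars to the sides `BC`, `CA`, `AB` erected at
`A₁`, `B₁`, `C₁` are concurrent. -/
theorem bevan_point (A B C A₁ B₁ C₁ : EuclideanSpace ℝ (Fin 2)) (a b c p : ℝ)
    (hABC : AffineIndependent ℝ ![A, B, C])
    (ha : a = dist B C) (hb : b = dist C A) (hc : c = dist A B) (hp : p = (a + b + c) / 2)
    (hA₁ : Sbtw ℝ B A₁ C) (hA₁d : dist B A₁ = p - c)
    (hB₁ : Sbtw ℝ C B₁ A) (hB₁d : dist C B₁ = p - a)
    (hC₁ : Sbtw ℝ A C₁ B) (hC₁d : dist A C₁ = p - b) :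
    ∃ V : EuclideanSpace ℝ (Fin 2),
        ⟪V - A₁, C - B⟫ = 0 ∧ ⟪V - B₁, A - C⟫ = 0 ∧ ⟪V - C₁, B - A⟫ = 0 := by
  refine exists_perpendiculars_concurrent_of_carnot hABC ?_
  rw [hA₁.wbtw.dist_right_eq_sub, hB₁.wbtw.dist_right_eq_sub, hC₁.wbtw.dist_right_eq_sub,
    dist_comm A₁, dist_comm B₁, dist_comm C₁, hA₁d, hB₁d, hC₁d, ← ha, ← hb, ← hc, hp]
  ring
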